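/- arXiv:1506.06232 — 2 statements merged into one kernel-verified Lean document; each statement's English description precedes it below -/
import Mathlib

section
/- For every x ≥ 0 one has ∫₀^∞ (2Φ(x/√(2z)) − 1) e^{−z} dz = 1 − e^{−x}. Equivalently, if X is a standard normal random variable and W₁ is a standard exponential random variable independent of X, then √(2W₁)·|X| has the standard exponential distribution (the distributional identity W₁ ≐ √(2W₁)|X|). -/
open MeasureTheory Real Set

/-- Standard normal distribution function. -/
noncomputable def stdNormalCDF (x : ℝ) : ℝ :=
  (Real.sqrt (2 * Real.pi))⁻¹ * ∫ t in Set.Iio x, Real.exp (-t ^ 2 / 2)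

/-!
Write `2Φ(u) - 1 = √(2/π) ∫₀^u e^{-t²/2} dt` and exchange the order of integration over
`{(z, t) : z, t > 0, 2 z t² < x²}`; the left-hand side becomes
`√(2/π) ∫₀^∞ e^{-t²/2} (1 - e^{-x²/(2t²)}) dt`. The remaining integral
`∫₀^∞ e^{-t²/2 - x²/(2t²)} dt = √(2π)/2 · e^{-x}` is the Cauchy–Schlömilch substitution
`u = t - x/t`: since `t ↦ x/t` maps `u` to `-u`, averaging `dt` with its image `x/t² dt` gives
`(1 + x/t²) dt / 2 = du / 2` over all of `ℝ`.
-/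

lemma exp_neg_sq_div_two_eq (t : ℝ) : exp (-t ^ 2 / 2) = exp (-(1 / 2) * t ^ 2) := by
  ring_nf

lemma integrable_exp_neg_sq_div_two : Integrable fun t : ℝ => exp (-t ^ 2 / 2) := by
  simpa only [exp_neg_sq_div_two_eq] using integrable_exp_neg_mul_sq (b := 1 / 2) (by norm_num)

lemma integral_exp_neg_sq_div_two : ∫ t, exp (-t ^ 2 / 2) = √(2 * π) := by
  simp only [exp_neg_sq_div_two_eq, integral_gaussian]
  congr 1; field_simp

lemma integral_Ioi_exp_neg_sq_div_two : ∫ t in Ioi 0, exp (-t ^ 2 / 2) = √(2 * π) / 2 := by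
  simp only [exp_neg_sq_div_two_eq, integral_gaussian_Ioi]
  congr 2; field_simp

lemma integral_Iio_exp_neg_sq_div_two : ∫ t in Iio 0, exp (-t ^ 2 / 2) = √(2 * π) / 2 := by
  have h := intervalIntegral.integral_Iio_add_Ici (b := 0)
    integrable_exp_neg_sq_div_two.integrableOn integrable_exp_neg_sq_div_two.integrableOn
  rw [integral_Ici_eq_integral_Ioi, integral_Ioi_exp_neg_sq_div_two,
    integral_exp_neg_sq_div_two] at h
  linarith

lemma two_mul_stdNormalCDF_sub_one {u : ℝ} (hu : 0 ≤ u) :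
    2 * stdNormalCDF u - 1 = 2 * (√(2 * π))⁻¹ * ∫ t in Ioo 0 u, exp (-t ^ 2 / 2) := by
  have hsplit : ∫ t in Iio u, exp (-t ^ 2 / 2)
      = (∫ t in Iio 0, exp (-t ^ 2 / 2)) + ∫ t in Ioo 0 u, exp (-t ^ 2 / 2) := by
    rw [← integral_Ico_eq_integral_Ioo, ← setIntegral_union
      ((Iio_disjoint_Ici le_rfl).mono_right Ico_subset_Ici_self) measurableSet_Ico
      integrable_exp_neg_sq_div_two.integrableOn integrable_exp_neg_sq_div_two.integrableOn,
      Iio_union_Ico_eq_Iio hu]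
  have hpos : 0 < √(2 * π) := by positivity
  rw [stdNormalCDF, hsplit, integral_Iio_exp_neg_sq_div_two]
  field_simp
  ring

section CauchySchlomilch

variable {E : Type*} [NormedAddCommGroup E] [NormedSpace ℝ E] {c : ℝ}

lemma hasDerivAt_const_div (c : ℝ) {t : ℝ} (ht : t ≠ 0) :
    HasDerivAt (fun t => c / t) (-(c / t ^ 2)) t := by
  simpa [div_eq_mul_inv, neg_div, pow_two, mul_inv] using (hasDerivAt_inv ht).const_mul c

lemma image_const_div_Ioi (hc : 0 < c) : (fun t => c / t) '' Ioi 0 = Ioi 0 := by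
  ext y
  refine ⟨?_, fun hy => ⟨c / y, div_pos hc hy, div_div_cancel₀ hc.ne'⟩⟩
  rintro ⟨t, ht, rfl⟩
  exact div_pos hc ht

lemma injOn_const_div_Ioi (hc : 0 < c) : InjOn (fun t => c / t) (Ioi 0) := by
  intro a _ b _ hab
  simpa only [div_div_cancel₀ hc.ne'] using congrArg (c / ·) hab

lemma integral_Ioi_comp_const_div (hc : 0 < c) (h : ℝ → E) :
    ∫ t in Ioi 0, h t = ∫ t in Ioi 0, (c / t ^ 2) • h (c / t) := by
  rw [← image_const_div_Ioi hc, integral_image_eq_integral_abs_deriv_smul measurableSet_Ioi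
    (fun t ht => (hasDerivAt_const_div c (ne_of_gt ht)).hasDerivWithinAt) (injOn_const_div_Ioi hc),
    image_const_div_Ioi hc]
  refine setIntegral_congr_fun measurableSet_Ioi fun t ht => ?_
  rw [abs_neg, abs_of_pos (div_pos hc (pow_pos ht 2))]

lemma integrableOn_Ioi_comp_const_div_iff (hc : 0 < c) (h : ℝ → E) :
    IntegrableOn h (Ioi 0) ↔ IntegrableOn (fun t => (c / t ^ 2) • h (c / t)) (Ioi 0) := by
  rw [← image_const_div_Ioi hc, integrableOn_image_iff_integrableOn_abs_deriv_smul
    measurableSet_Ioi (fun t ht => (hasDerivAt_const_div c (ne_of_gt ht)).hasDerivWithinAt)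
    (injOn_const_div_Ioi hc), image_const_div_Ioi hc]
  refine integrableOn_congr_fun (fun t ht => ?_) measurableSet_Ioi
  rw [abs_neg, abs_of_pos (div_pos hc (pow_pos ht 2))]

lemma hasDerivAt_sub_const_div (c : ℝ) {t : ℝ} (ht : t ≠ 0) :
    HasDerivAt (fun t => t - c / t) (1 + c / t ^ 2) t := by
  simpa only [sub_neg_eq_add] using (hasDerivAt_id' t).fun_sub (hasDerivAt_const_div c ht)

lemma strictMonoOn_sub_const_div (hc : 0 < c) : StrictMonoOn (fun t => t - c / t) (Ioi 0) := by
  intro a ha b _ hab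
  have : c / b < c / a := div_lt_div_of_pos_left hc ha hab
  dsimp only
  linarith

lemma image_sub_const_div_Ioi (hc : 0 < c) : (fun t => t - c / t) '' Ioi 0 = univ := by
  refine eq_univ_of_forall fun y => ?_
  -- the positive root of `t ^ 2 - y t - c = 0`
  set s := √(y ^ 2 + 4 * c)
  have hs : s ^ 2 = y ^ 2 + 4 * c := sq_sqrt (by positivity)
  have hys : 0 < y + s := by nlinarith [sqrt_nonneg (y ^ 2 + 4 * c)]
  refine ⟨(y + s) / 2, half_pos hys, ?_⟩
  field_simp
  nlinarith

variable {g : ℝ → E}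

lemma integrableOn_Ioi_comp_sub_const_div (hc : 0 < c) (hg : Integrable g) :
    IntegrableOn (fun t => g (t - c / t)) (Ioi 0) := by
  have hweighted : IntegrableOn (fun t => |1 + c / t ^ 2| • g (t - c / t)) (Ioi 0) := by
    rw [← integrableOn_image_iff_integrableOn_abs_deriv_smul measurableSet_Ioi
      (fun t ht => (hasDerivAt_sub_const_div c (ne_of_gt ht)).hasDerivWithinAt)
      (strictMonoOn_sub_const_div hc).injOn, image_sub_const_div_Ioi hc]
    exact hg.integrableOn
  refine IntegrableOn.congr_fun (hweighted.bdd_smul 1 (φ := fun t => |1 + c / t ^ 2|⁻¹)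
    (Measurable.aestronglyMeasurable (by fun_prop)) ?_) (fun t ht => ?_) measurableSet_Ioi
  · filter_upwards [ae_restrict_mem measurableSet_Ioi] with t ht
    have : 1 ≤ 1 + c / t ^ 2 := by have := div_pos hc (pow_pos ht 2); linarith
    rw [norm_inv, norm_abs_eq_norm, Real.norm_of_nonneg (by linarith)]
    exact inv_le_one_of_one_le₀ this
  · have : |1 + c / t ^ 2| ≠ 0 := by have := div_pos hc (pow_pos ht 2); positivity
    simp only [Pi.smul_apply', smul_smul, inv_mul_cancel₀ this, one_smul]

lemma integral_Ioi_comp_sub_const_div (hc : 0 < c) (hg : Integrable g)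
    (heven : ∀ u, g (-u) = g u) :
    ∫ t in Ioi 0, g (t - c / t) = (2 : ℝ)⁻¹ • ∫ t, g t := by
  have hinv : ∀ t ∈ Ioi (0 : ℝ), g (c / t - c / (c / t)) = g (t - c / t) := fun t _ => by
    rw [div_div_cancel₀ hc.ne', ← heven, neg_sub]
  have hint := integrableOn_Ioi_comp_sub_const_div hc hg
  have hint' : IntegrableOn (fun t => (c / t ^ 2) • g (t - c / t)) (Ioi 0) :=
    ((integrableOn_Ioi_comp_const_div_iff hc _).1 hint).congr_fun
      (fun t ht => by simp only [hinv t ht]) measurableSet_Ioi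
  have hsym : ∫ t in Ioi 0, (c / t ^ 2) • g (t - c / t) = ∫ t in Ioi 0, g (t - c / t) := by
    rw [integral_Ioi_comp_const_div hc (fun t => g (t - c / t))]
    exact setIntegral_congr_fun measurableSet_Ioi fun t ht => by simp only [hinv t ht]
  have hcov : ∫ t, g t = ∫ t in Ioi 0, g (t - c / t) + (c / t ^ 2) • g (t - c / t) := by
    rw [← setIntegral_univ, ← image_sub_const_div_Ioi hc,
      integral_image_eq_integral_abs_deriv_smul measurableSet_Ioi
        (fun t ht => (hasDerivAt_sub_const_div c (ne_of_gt ht)).hasDerivWithinAt)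
        (strictMonoOn_sub_const_div hc).injOn]
    refine setIntegral_congr_fun measurableSet_Ioi fun t ht => ?_
    rw [abs_of_pos (by have := div_pos hc (pow_pos ht 2); linarith), add_smul, one_smul]
  rw [hcov, integral_add hint hint', hsym, ← two_smul ℝ, smul_smul, inv_mul_cancel₀ two_ne_zero,
    one_smul]

end CauchySchlomilch

lemma exp_neg_sq_div_two_sub_div_eq {x t : ℝ} (ht : t ≠ 0) :
    exp (-t ^ 2 / 2 - x ^ 2 / (2 * t ^ 2)) = exp (-x) * exp (-(t - x / t) ^ 2 / 2) := by
  rw [← exp_add]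
  congr 1
  field_simp
  ring

lemma integral_Ioi_exp_neg_sq_div_two_sub_div {x : ℝ} (hx : 0 ≤ x) :
    ∫ t in Ioi 0, exp (-t ^ 2 / 2 - x ^ 2 / (2 * t ^ 2)) = √(2 * π) / 2 * exp (-x) := by
  rcases hx.eq_or_lt with rfl | hx
  · simp [integral_Ioi_exp_neg_sq_div_two]
  rw [setIntegral_congr_fun measurableSet_Ioi fun t ht => exp_neg_sq_div_two_sub_div_eq
      (ne_of_gt ht), integral_const_mul,
    integral_Ioi_comp_sub_const_div hx integrable_exp_neg_sq_div_two (fun u => by rw [neg_sq]),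
    integral_exp_neg_sq_div_two, smul_eq_mul]
  ring

lemma integrableOn_Ioi_exp_neg_sq_div_two_sub_div (x : ℝ) :
    IntegrableOn (fun t => exp (-t ^ 2 / 2 - x ^ 2 / (2 * t ^ 2))) (Ioi 0) := by
  refine integrable_exp_neg_sq_div_two.integrableOn.mono' (by fun_prop) ?_
  filter_upwards with t
  rw [norm_of_nonneg (exp_nonneg _), exp_le_exp]
  have : 0 ≤ x ^ 2 / (2 * t ^ 2) := by positivity
  linarith

lemma integral_Ioo_exp_neg {a : ℝ} (ha : 0 ≤ a) :
    ∫ z in Ioo 0 a, exp (-z) = 1 - exp (-a) := by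
  rw [← integral_Ioc_eq_integral_Ioo, ← intervalIntegral.integral_of_le ha,
    intervalIntegral.integral_comp_neg (fun w => exp w), integral_exp]
  simp

section OrderOfIntegration

variable {x : ℝ}

lemma Ioi_inter_setOf_mul_sq_lt_sq_eq_Ioo_div_sqrt {z : ℝ} (hx : 0 ≤ x) (hz : 0 < z) :
    Ioi 0 ∩ {t | 2 * z * t ^ 2 < x ^ 2} = Ioo 0 (x / √(2 * z)) := by
  have hs : 0 < √(2 * z) := by positivity
  ext t
  simp only [mem_inter_iff, mem_Ioi, mem_ofPred_eq, mem_Ioo, and_congr_right_iff]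
  intro ht
  rw [lt_div_iff₀ hs, ← sq_lt_sq₀ (by positivity) hx, mul_pow, sq_sqrt (by positivity)]
  constructor <;> intro h <;> linarith

lemma Ioi_inter_setOf_mul_sq_lt_sq_eq_Ioo_div {t : ℝ} (ht : 0 < t) :
    Ioi 0 ∩ {z | 2 * z * t ^ 2 < x ^ 2} = Ioo 0 (x ^ 2 / (2 * t ^ 2)) := by
  ext z
  simp only [mem_inter_iff, mem_Ioi, mem_ofPred_eq, mem_Ioo,
    lt_div_iff₀ (by positivity : 0 < 2 * t ^ 2)]
  constructor <;> rintro ⟨h1, h2⟩ <;> exact ⟨h1, by linarith⟩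

lemma integral_Ioi_integral_Ioo_div_sqrt_mul_exp_neg {f : ℝ → ℝ} (hf : IntegrableOn f (Ioi 0))
    (hx : 0 ≤ x) :
    ∫ z in Ioi 0, (∫ t in Ioo 0 (x / √(2 * z)), f t) * exp (-z)
      = ∫ t in Ioi 0, f t * (1 - exp (-(x ^ 2 / (2 * t ^ 2)))) := by
  set S : Set (ℝ × ℝ) := {p | 2 * p.1 * p.2 ^ 2 < x ^ 2}
  have hS : MeasurableSet S := measurableSet_lt (by fun_prop) measurable_const
  set F : ℝ × ℝ → ℝ := S.indicator fun p => exp (-p.1) * f p.2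
  have hF : Integrable F ((volume.restrict (Ioi 0)).prod (volume.restrict (Ioi 0))) :=
    ((integrableOn_exp_neg_Ioi 0).mul_prod hf).indicator hS
  have hz : ∀ z ∈ Ioi (0 : ℝ),
      ∫ t in Ioi 0, F (z, t) = (∫ t in Ioo 0 (x / √(2 * z)), f t) * exp (-z) := by
    intro z hz
    have hsec : ∀ t,
        F (z, t) = {t | 2 * z * t ^ 2 < x ^ 2}.indicator (fun t => exp (-z) * f t) t :=
      fun t => (indicator_comp_right (Prod.mk z)).symm
    simp only [hsec]
    rw [setIntegral_indicator (measurableSet_lt (by fun_prop) measurable_const),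
      Ioi_inter_setOf_mul_sq_lt_sq_eq_Ioo_div_sqrt hx hz, integral_const_mul, mul_comm]
  have ht : ∀ t ∈ Ioi (0 : ℝ),
      ∫ z in Ioi 0, F (z, t) = f t * (1 - exp (-(x ^ 2 / (2 * t ^ 2)))) := by
    intro t ht
    have hsec : ∀ z,
        F (z, t) = {z | 2 * z * t ^ 2 < x ^ 2}.indicator (fun z => exp (-z) * f t) z :=
      fun z => (indicator_comp_right (fun z => (z, t))).symm
    simp only [hsec]
    rw [setIntegral_indicator (measurableSet_lt (by fun_prop) measurable_const),
      Ioi_inter_setOf_mul_sq_lt_sq_eq_Ioo_div ht, integral_mul_const,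
      integral_Ioo_exp_neg (by positivity), mul_comm]
  rw [← setIntegral_congr_fun measurableSet_Ioi hz, ← setIntegral_congr_fun measurableSet_Ioi ht]
  exact integral_integral_swap hF

end OrderOfIntegration

/-- Lemma 1: for every `x ≥ 0`,
`∫₀^∞ (2 Φ(x/√(2z)) − 1) e^{−z} dz = 1 − e^{−x}`, i.e. if `X` is standard
normal and `W₁` standard exponential, independent, then `√(2W₁)·|X|` is
standard exponential. -/
theorem weibull_halfnormal_exponential_mixture (x : ℝ) (hx : 0 ≤ x) :
    ∫ z in Set.Ioi (0 : ℝ),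
        (2 * stdNormalCDF (x / Real.sqrt (2 * z)) - 1) * Real.exp (-z)
      = 1 - Real.exp (-x) := by
  have hcdf : ∀ z ∈ Ioi (0 : ℝ), (2 * stdNormalCDF (x / √(2 * z)) - 1) * exp (-z)
      = 2 * (√(2 * π))⁻¹ * ((∫ t in Ioo 0 (x / √(2 * z)), exp (-t ^ 2 / 2)) * exp (-z)) :=
    fun z _ => by rw [two_mul_stdNormalCDF_sub_one (by positivity)]; ring
  have hsplit : ∀ t ∈ Ioi (0 : ℝ), exp (-t ^ 2 / 2) * (1 - exp (-(x ^ 2 / (2 * t ^ 2))))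
      = exp (-t ^ 2 / 2) - exp (-t ^ 2 / 2 - x ^ 2 / (2 * t ^ 2)) :=
    fun t _ => by rw [mul_sub, mul_one, sub_eq_add_neg (-t ^ 2 / 2), exp_add]
  rw [setIntegral_congr_fun measurableSet_Ioi hcdf, integral_const_mul,
    integral_Ioi_integral_Ioo_div_sqrt_mul_exp_neg integrable_exp_neg_sq_div_two.integrableOn hx,
    setIntegral_congr_fun measurableSet_Ioi hsplit,
    integral_sub integrable_exp_neg_sq_div_two.integrableOn
      (integrableOn_Ioi_exp_neg_sq_div_two_sub_div x),
    integral_Ioi_exp_neg_sq_div_two, integral_Ioi_exp_neg_sq_div_two_sub_div hx]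
  field_simp
end

section
/- Let α ∈ (0,2) and let μ be a probability measure on ℝ whose characteristic function satisfies ∫_ℝ e^{i t x} dμ(x) = e^{−|t|^α} for all t ∈ ℝ (μ is the symmetric strictly stable law with exponent α). Then for every β with 0 < β < α, ∫_ℝ |x|^β dμ(x) = (2^β/√π) · Γ((β+1)/2) · Γ(1 − β/α) / Γ(1 − β/2). -/
/-!
For a probability measure `P` on `ℝ` and `β > 0`, the substitution `t ↦ |x| t` and Tonelli give
`(∫ |x|^β dP) · K_β = ∫₀^∞ (1 - Re φ_P(t)) t^{-1-β} dt` with `K_β = ∫₀^∞ (1 - cos t) t^{-1-β} dt`.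
If `φ_P(t) = e^{-|t|^γ}` with `β < γ`, an integration by parts evaluates the right-hand side to
`Γ(1 - β/γ)/β`. The constant `K_β` is eliminated by the Gaussian law `N(0, 2)`, the case `γ = 2`,
whose absolute moments are elementary. All of this is done in `ℝ≥0∞`, so neither the finiteness
of `K_β` nor that of the stable moment has to be known in advance: both follow from the identities.
-/

open MeasureTheory ProbabilityTheory Real Set Filter Topology
open scoped ENNReal NNReal

section CosineKernel

variable {β : ℝ}

lemma lintegral_one_sub_cos_mul_rpow (hβ : 0 < β) (x : ℝ) :
    ∫⁻ t in Ioi 0, ENNReal.ofReal ((1 - cos (x * t)) * t ^ (-1 - β))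
      = ENNReal.ofReal (|x| ^ β)
        * ∫⁻ t in Ioi 0, ENNReal.ofReal ((1 - cos t) * t ^ (-1 - β)) := by
  rcases eq_or_ne x 0 with rfl | hx
  · simp [zero_rpow hβ.ne']
  have hc : 0 < |x| := abs_pos.2 hx
  have hsubst := lintegral_image_eq_lintegral_abs_deriv_mul (measurableSet_Ioi (a := (0 : ℝ)))
    (fun t _ => ((hasDerivAt_id t).const_mul |x|).hasDerivWithinAt)
    (mul_right_injective₀ hc.ne').injOn
    (fun s => ENNReal.ofReal ((1 - cos s) * s ^ (-1 - β)))
  simp only [image_mul_left_Ioi hc, mul_zero, id, mul_one] at hsubst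
  rw [hsubst, ← lintegral_const_mul' _ _ ENNReal.ofReal_ne_top]
  refine setLIntegral_congr_fun measurableSet_Ioi fun t (ht : 0 < t) => ?_
  rw [abs_of_pos hc, ← ENNReal.ofReal_mul hc.le, ← ENNReal.ofReal_mul (by positivity)]
  congr 1
  have hcos : cos (|x| * t) = cos (x * t) := by
    rw [← cos_abs (x * t), abs_mul, abs_of_pos ht]
  have hpow : |x| ^ β * (|x| * |x| ^ (-1 - β)) = 1 := by
    rw [mul_comm |x|, ← rpow_add_one hc.ne', ← rpow_add hc,
      show β + (-1 - β + 1) = 0 by ring, rpow_zero]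
  rw [hcos, mul_rpow hc.le ht.le]
  linear_combination -(1 - cos (x * t)) * t ^ (-1 - β) * hpow

lemma re_charFun_eq_integral_cos (P : Measure ℝ) [IsFiniteMeasure P] (t : ℝ) :
    (charFun P t).re = ∫ x, cos (x * t) ∂P := by
  have hint : Integrable (fun x : ℝ => Complex.exp (t * x * Complex.I)) P := by
    refine (integrable_const (1 : ℝ)).mono' (by fun_prop) (ae_of_all _ fun x => ?_)
    simp [← Complex.ofReal_mul, Complex.norm_exp_ofReal_mul_I]
  rw [charFun_apply_real, ← RCLike.re_to_complex, ← integral_re hint]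
  simp_rw [RCLike.re_to_complex, ← Complex.ofReal_mul, Complex.exp_ofReal_mul_I_re, mul_comm t]

lemma lintegral_ofReal_one_sub_cos_mul (P : Measure ℝ) [IsProbabilityMeasure P] (t : ℝ) :
    ∫⁻ x, ENNReal.ofReal (1 - cos (x * t)) ∂P = ENNReal.ofReal (1 - (charFun P t).re) := by
  have hcos : Integrable (fun x => cos (x * t)) P :=
    (integrable_const (1 : ℝ)).mono' (by fun_prop) (ae_of_all _ fun x => abs_cos_le_one _)
  have hint : Integrable (fun x => 1 - cos (x * t)) P := (integrable_const 1).sub hcos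
  rw [← ofReal_integral_eq_lintegral_ofReal hint
      (ae_of_all _ fun x => sub_nonneg.2 (cos_le_one _)),
    integral_sub (integrable_const 1) hcos, re_charFun_eq_integral_cos, integral_const,
    probReal_univ, one_smul]

theorem lintegral_abs_rpow_mul_lintegral_one_sub_cos (hβ : 0 < β)
    (P : Measure ℝ) [IsProbabilityMeasure P] :
    (∫⁻ x, ENNReal.ofReal (|x| ^ β) ∂P)
        * ∫⁻ t in Ioi 0, ENNReal.ofReal ((1 - cos t) * t ^ (-1 - β))
      = ∫⁻ t in Ioi 0, ENNReal.ofReal ((1 - (charFun P t).re) * t ^ (-1 - β)) :=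
  calc _ = ∫⁻ x, (∫⁻ t in Ioi 0, ENNReal.ofReal ((1 - cos (x * t)) * t ^ (-1 - β))) ∂P := by
          rw [← lintegral_mul_const _ (by fun_prop)]
          exact lintegral_congr fun x => (lintegral_one_sub_cos_mul_rpow hβ x).symm
    _ = ∫⁻ t in Ioi 0, ∫⁻ x, ENNReal.ofReal ((1 - cos (x * t)) * t ^ (-1 - β)) ∂P :=
          lintegral_lintegral_swap ((by fun_prop : Measurable fun p : ℝ × ℝ =>
            ENNReal.ofReal ((1 - cos (p.1 * p.2)) * p.2 ^ (-1 - β))).aemeasurable)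
    _ = _ := setLIntegral_congr_fun measurableSet_Ioi fun t (ht : 0 < t) => by
          simp_rw [ENNReal.ofReal_mul (sub_nonneg.2 (cos_le_one _))]
          rw [lintegral_mul_const _ (by fun_prop), lintegral_ofReal_one_sub_cos_mul,
            ← ENNReal.ofReal_mul
              (sub_nonneg.2 ((Complex.re_le_norm _).trans (norm_charFun_le_one t)))]

end CosineKernel

lemma integrableOn_Ioi_of_norm_le_rpow {f : ℝ → ℝ} {p q : ℝ}
    (hf : AEStronglyMeasurable f (volume.restrict (Ioi 0))) (hp : -1 < p) (hq : q < -1)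
    (h₀ : ∀ t ∈ Ioc (0 : ℝ) 1, ‖f t‖ ≤ t ^ p) (h₁ : ∀ t ∈ Ioi (1 : ℝ), ‖f t‖ ≤ t ^ q) :
    IntegrableOn f (Ioi 0) := by
  rw [← Ioc_union_Ioi_eq_Ioi zero_le_one, integrableOn_union]
  refine ⟨.mono' ?_ (hf.mono_set Ioc_subset_Ioi_self)
      ((ae_restrict_iff' measurableSet_Ioc).2 (ae_of_all _ h₀)),
    .mono' (integrableOn_Ioi_rpow_of_lt hq one_pos) (hf.mono_set (Ioi_subset_Ioi zero_le_one))
      ((ae_restrict_iff' measurableSet_Ioi).2 (ae_of_all _ h₁))⟩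
  exact (intervalIntegrable_iff_integrableOn_Ioc_of_le zero_le_one).1
    (intervalIntegral.intervalIntegrable_rpow' hp)

lemma one_sub_exp_neg_nonneg {s : ℝ} (hs : 0 ≤ s) : 0 ≤ 1 - exp (-s) :=
  sub_nonneg.2 (exp_le_one_iff.2 (neg_nonpos.2 hs))

lemma one_sub_exp_neg_le (s : ℝ) : 1 - exp (-s) ≤ s := by
  linarith [one_sub_le_exp_neg s]

section OneSubExp

variable {β γ : ℝ}

lemma integrableOn_one_sub_exp_neg_rpow_mul_rpow (hβ : 0 < β) (hβγ : β < γ) :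
    IntegrableOn (fun t => (1 - exp (-t ^ γ)) * t ^ (-1 - β)) (Ioi 0) := by
  have hnorm : ∀ t : ℝ, 0 < t →
      ‖(1 - exp (-t ^ γ)) * t ^ (-1 - β)‖ = (1 - exp (-t ^ γ)) * t ^ (-1 - β) := fun t ht =>
    Real.norm_of_nonneg (mul_nonneg (one_sub_exp_neg_nonneg (by positivity)) (by positivity))
  refine integrableOn_Ioi_of_norm_le_rpow (p := γ - 1 - β) (q := -1 - β) (by fun_prop)
    (by linarith) (by linarith) (fun t ht => ?_) (fun t (ht : 1 < t) => ?_)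
  · rw [hnorm t ht.1, show γ - 1 - β = γ + (-1 - β) by ring, rpow_add ht.1]
    exact mul_le_mul_of_nonneg_right (one_sub_exp_neg_le _) (rpow_nonneg ht.1.le _)
  · rw [hnorm t (by linarith)]
    exact mul_le_of_le_one_left (by positivity) (by linarith [exp_pos (-t ^ γ)])

lemma hasDerivAt_one_sub_exp_neg_rpow_mul_rpow {t : ℝ} (ht : 0 < t) :
    HasDerivAt (fun t => (1 - exp (-t ^ γ)) * t ^ (-β))
      (γ * (t ^ (γ - 1 - β) * exp (-t ^ γ)) - β * ((1 - exp (-t ^ γ)) * t ^ (-1 - β))) t := by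
  have h := (((hasDerivAt_rpow_const (p := γ) (Or.inl ht.ne')).neg.exp).const_sub 1).mul
    (hasDerivAt_rpow_const (p := -β) (Or.inl ht.ne'))
  refine h.congr_deriv ?_
  rw [show γ - 1 - β = (γ - 1) + -β by ring, rpow_add ht, show -1 - β = -β - 1 by ring]
  simp only [Pi.neg_apply]
  ring

lemma continuousWithinAt_one_sub_exp_neg_rpow_mul_rpow (hβ : 0 < β) (hβγ : β < γ) :
    ContinuousWithinAt (fun t => (1 - exp (-t ^ γ)) * t ^ (-β)) (Ici 0) 0 := by
  have hγβ : 0 < γ - β := by linarith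
  have hlim : Tendsto (fun t : ℝ => t ^ (γ - β)) (𝓝[Ici 0] 0) (𝓝 0) := by
    simpa [zero_rpow hγβ.ne'] using
      ((continuousAt_rpow_const 0 _ (Or.inr hγβ.le)).tendsto).mono_left nhdsWithin_le_nhds
  rw [ContinuousWithinAt, zero_rpow (by linarith : γ ≠ 0), zero_rpow (neg_ne_zero.2 hβ.ne')]
  simp only [neg_zero, exp_zero, sub_self, mul_zero]
  refine squeeze_zero_norm' ?_ hlim
  filter_upwards [self_mem_nhdsWithin] with t (ht : 0 ≤ t)
  rcases ht.eq_or_lt with rfl | ht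
  · simp [zero_rpow hγβ.ne', zero_rpow (neg_ne_zero.2 hβ.ne')]
  rw [Real.norm_of_nonneg (mul_nonneg (one_sub_exp_neg_nonneg (by positivity)) (by positivity)),
    show γ - β = γ + -β by ring, rpow_add ht]
  exact mul_le_mul_of_nonneg_right (one_sub_exp_neg_le _) (by positivity)

lemma tendsto_one_sub_exp_neg_rpow_mul_rpow_atTop (hβ : 0 < β) (hγ : 0 < γ) :
    Tendsto (fun t => (1 - exp (-t ^ γ)) * t ^ (-β)) atTop (𝓝 0) := by
  simpa using ((tendsto_exp_neg_atTop_nhds_zero.comp (tendsto_rpow_atTop hγ)).const_sub 1).mul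
    (tendsto_rpow_neg_atTop hβ)

theorem integral_one_sub_exp_neg_rpow_mul_rpow (hβ : 0 < β) (hβγ : β < γ) :
    ∫ t in Ioi 0, (1 - exp (-t ^ γ)) * t ^ (-1 - β) = Gamma (1 - β / γ) / β := by
  have hγ : 0 < γ := hβ.trans hβγ
  have hA := integrableOn_one_sub_exp_neg_rpow_mul_rpow hβ hβγ
  have hB := integrableOn_rpow_mul_exp_neg_rpow (s := γ - 1 - β) (by linarith) hγ
  have hparts := integral_Ioi_of_hasDerivAt_of_tendsto
    (continuousWithinAt_one_sub_exp_neg_rpow_mul_rpow hβ hβγ)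
    (fun t ht => hasDerivAt_one_sub_exp_neg_rpow_mul_rpow ht)
    ((hB.const_mul γ).sub (hA.const_mul β))
    (tendsto_one_sub_exp_neg_rpow_mul_rpow_atTop hβ hγ)
  rw [integral_sub (hB.const_mul γ) (hA.const_mul β), integral_const_mul, integral_const_mul,
    integral_rpow_mul_exp_neg_rpow hγ (by linarith), zero_rpow (by linarith : γ ≠ 0),
    zero_rpow (neg_ne_zero.2 hβ.ne')] at hparts
  rw [show (γ - 1 - β + 1) / γ = 1 - β / γ by field_simp; ring, ← mul_assoc,
    mul_one_div_cancel hγ.ne', one_mul, mul_zero, sub_zero, sub_eq_zero] at hparts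
  rw [eq_div_iff hβ.ne', mul_comm, hparts]

end OneSubExp

lemma charFun_gaussianReal_zero_two (t : ℝ) :
    charFun (gaussianReal 0 2) t = ↑(exp (-|t| ^ (2 : ℝ))) := by
  rw [charFun_gaussianReal, rpow_two, sq_abs]
  push_cast
  ring_nf

lemma integral_abs_rpow_gaussianReal {β : ℝ} {v : ℝ≥0} (hv : v ≠ 0) (hβ : -1 < β) :
    ∫ x, |x| ^ β ∂gaussianReal 0 v = (2 * v) ^ (β / 2) * Gamma ((β + 1) / 2) / √π := by
  have hv' : (0 : ℝ) < 2 * v := by positivity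
  set f : ℝ → ℝ := fun r => (√(2 * π * v))⁻¹ * (r ^ β * exp (-(2 * (v : ℝ))⁻¹ * r ^ (2 : ℝ)))
  have hf : ∀ x, gaussianPDFReal 0 v x • |x| ^ β = f |x| := fun x => by
    simp only [gaussianPDFReal, f, smul_eq_mul, sub_zero, rpow_two, sq_abs]
    rw [neg_div, div_eq_inv_mul, ← neg_mul]
    ring
  rw [integral_gaussianReal_eq_integral_smul hv]
  simp_rw [hf]
  rw [integral_comp_abs, integral_const_mul,
    integral_rpow_mul_exp_neg_mul_rpow two_pos hβ (inv_pos.2 hv')]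
  have hsqrt : √(2 * π * v) = √π * √(2 * v) := by
    rw [← sqrt_mul pi_pos.le]; ring_nf
  have hpow : ((2 * (v : ℝ))⁻¹) ^ (-(β + 1) / 2) = (2 * v) ^ (β / 2) * √(2 * v) := by
    rw [inv_rpow hv'.le, ← rpow_neg hv'.le, sqrt_eq_rpow, ← rpow_add hv']
    ring_nf
  rw [hpow, hsqrt]
  field_simp

theorem lintegral_abs_rpow_mul_eq_of_charFun {β γ : ℝ} (hβ : 0 < β) (hβγ : β < γ)
    (P : Measure ℝ) [IsProbabilityMeasure P] (hP : ∀ t, charFun P t = ↑(exp (-|t| ^ γ))) :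
    (∫⁻ x, ENNReal.ofReal (|x| ^ β) ∂P)
        * ∫⁻ t in Ioi 0, ENNReal.ofReal ((1 - cos t) * t ^ (-1 - β))
      = ENNReal.ofReal (Gamma (1 - β / γ) / β) := by
  rw [lintegral_abs_rpow_mul_lintegral_one_sub_cos hβ,
    ← integral_one_sub_exp_neg_rpow_mul_rpow hβ hβγ,
    ofReal_integral_eq_lintegral_ofReal (integrableOn_one_sub_exp_neg_rpow_mul_rpow hβ hβγ)]
  · refine setLIntegral_congr_fun measurableSet_Ioi fun t (ht : 0 < t) => ?_
    rw [hP, Complex.ofReal_re, abs_of_pos ht]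
  · filter_upwards [ae_restrict_mem measurableSet_Ioi] with t (ht : 0 < t)
    exact mul_nonneg (one_sub_exp_neg_nonneg (by positivity)) (by positivity)

lemma ENNReal.toReal_eq_mul_div_of_mul_eq_ofReal {x y k : ℝ≥0∞} {a b : ℝ} (ha : 0 ≤ a) (hb : 0 < b)
    (hx : x * k = ENNReal.ofReal a) (hy : y * k = ENNReal.ofReal b) :
    x.toReal = a * y.toReal / b := by
  have hx' := congrArg ENNReal.toReal hx
  have hy' := congrArg ENNReal.toReal hy
  rw [ENNReal.toReal_mul, ENNReal.toReal_ofReal ha] at hx'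
  rw [ENNReal.toReal_mul, ENNReal.toReal_ofReal hb.le] at hy'
  have hk : k.toReal ≠ 0 := fun hk => by rw [hk, mul_zero] at hy'; exact hb.ne hy'
  have hy0 : y.toReal ≠ 0 := fun hy0 => by rw [hy0, zero_mul] at hy'; exact hb.ne hy'
  rw [← hx', ← hy']
  field_simp

theorem symmStable_absolute_moments_general
    (α : ℝ) (hα2 : α < 2)
    (μ : Measure ℝ) [IsProbabilityMeasure μ]
    (hμ : ∀ t : ℝ,
      ∫ x, Complex.exp (Complex.I * t * x) ∂μ = ↑(Real.exp (-|t| ^ α)))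
    (β : ℝ) (hβ0 : 0 < β) (hβα : β < α) :
    ∫ x, |x| ^ β ∂μ
      = (2 ^ β / Real.sqrt Real.pi) * Real.Gamma ((β + 1) / 2)
          * Real.Gamma (1 - β / α) / Real.Gamma (1 - β / 2) := by
  have hμ' : ∀ t : ℝ, charFun μ t = ↑(exp (-|t| ^ α)) := fun t => by
    rw [charFun_apply_real, ← hμ t]
    congr with x
    ring_nf
  have hmoment (P : Measure ℝ) :
      ∫ x, |x| ^ β ∂P = (∫⁻ x, ENNReal.ofReal (|x| ^ β) ∂P).toReal :=
    integral_eq_lintegral_of_nonneg_ae (ae_of_all _ fun x => by positivity)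
      (continuous_abs.measurable.pow_const β).aestronglyMeasurable
  have hgauss : ∫ x, |x| ^ β ∂gaussianReal 0 2 = 2 ^ β * Gamma ((β + 1) / 2) / √π := by
    rw [integral_abs_rpow_gaussianReal two_ne_zero (by linarith), NNReal.coe_ofNat,
      show (2 : ℝ) * 2 = 2 ^ (2 : ℝ) by norm_num, ← rpow_mul zero_le_two,
      mul_div_cancel₀ _ two_ne_zero]
  have hΓα : 0 < Gamma (1 - β / α) / β :=
    div_pos (Gamma_pos_of_pos (sub_pos.2 ((div_lt_one (hβ0.trans hβα)).2 hβα))) hβ0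
  have hΓ2 : 0 < Gamma (1 - β / 2) / β :=
    div_pos (Gamma_pos_of_pos (by linarith)) hβ0
  rw [hmoment, ENNReal.toReal_eq_mul_div_of_mul_eq_ofReal hΓα.le hΓ2
    (lintegral_abs_rpow_mul_eq_of_charFun hβ0 hβα μ hμ')
    (lintegral_abs_rpow_mul_eq_of_charFun hβ0 (hβα.trans hα2) _ charFun_gaussianReal_zero_two),
    ← hmoment, hgauss]
  field_simp

/-- Corollary 3: absolute moments of the symmetric strictly stable law. If `μ`
is the probability measure on `ℝ` with characteristic function `e^{−|t|^α}`,
`α ∈ (0,2)`, then for `0 < β < α`,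
`∫ |x|^β dμ(x) = (2^β/√π) Γ((β+1)/2) Γ(1 − β/α)/Γ(1 − β/2)`. -/
theorem symmStable_absolute_moments
    (α : ℝ) (hα0 : 0 < α) (hα2 : α < 2)
    (μ : Measure ℝ) [IsProbabilityMeasure μ]
    (hμ : ∀ t : ℝ,
      ∫ x, Complex.exp (Complex.I * t * x) ∂μ = ↑(Real.exp (-|t| ^ α)))
    (β : ℝ) (hβ0 : 0 < β) (hβα : β < α) :
    ∫ x, |x| ^ β ∂μ
      = (2 ^ β / Real.sqrt Real.pi) * Real.Gamma ((β + 1) / 2)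
          * Real.Gamma (1 - β / α) / Real.Gamma (1 - β / 2) :=
  symmStable_absolute_moments_general α hα2 μ hμ β hβ0 hβα
end
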